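/- Define D_+* := −y_1·d_+* : V_k → V_{k+1} (where y_1 acts on V_{k+1}). Then (T_i^{-1}, d_−, D_+*) satisfy the defining relations of an action of 𝔸_{q^{-1}}: T_1^{-1}(D_+*)² = (D_+*)²; D_+* T_i^{-1} = T_{i+1}^{-1} D_+* for 1 ≤ i ≤ k−1; d_−(D_+*d_− − d_−D_+*)T_{k−1}^{-1} = q^{-1}(D_+*d_− − d_−D_+*)d_− for k ≥ 2; and T_1^{-1}(D_+*d_− − d_−D_+*)D_+* = q^{-1}·D_+*(D_+*d_− − d_−D_+*) for k ≥ 1. Moreover the pair consisting of the original (T_i, d_−, d_+) and (T_i^{-1}, d_−, D_+*) is again correctly intertwined: setting Z_1 := (q^k/(1−q))(D_+*d_− − d_−D_+*)T*_{k↘1} and Z_{i+1} := q^{-1}·T_i Z_i T_i on V_k, one has d_+ Z_i = Z_{i+1} d_+ and D_+* y_i = y_{i+1} D_+* for 1 ≤ i ≤ k, and Z_1 d_+ = −t·q^{k+1}·y_1·D_+* as maps V_k → V_{k+1}. -/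

import Mathlib

noncomputable section

open LinearMap

/-- `T_i⁻¹ = q⁻¹ (T_i + (q − 1))`, the inverse of a Hecke operator. -/
def heckeInv {F : Type*} [Field F] (q : F) {M : Type*} [AddCommGroup M] [Module F M]
    (t : Module.End F M) : Module.End F M :=
  q⁻¹ • (t + (q - 1) • (1 : Module.End F M))

/-- `TdownTo1 T j = T_{j↘1} = T_{j−1} T_{j−2} ⋯ T_1`. -/
def TdownTo1 {M : Type*} [Monoid M] (T : ℕ → M) : ℕ → M
  | 0 => 1
  | 1 => 1
  | j + 2 => T (j + 1) * TdownTo1 T (j + 1)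

/-- `TupFrom1 T j = T_{1↗j} = T_1 T_2 ⋯ T_{j−1}`. -/
def TupFrom1 {M : Type*} [Monoid M] (T : ℕ → M) : ℕ → M
  | 0 => 1
  | 1 => 1
  | j + 2 => TupFrom1 T (j + 1) * T (j + 1)

/-- The commutator `d₊d₋ − d₋d₊` as an operator on `V (m+1)`. -/
def commDD {F : Type*} [Field F] (V : ℕ → Type*) [∀ k, AddCommGroup (V k)]
    [∀ k, Module F (V k)] (dm : ∀ k, V (k + 1) →ₗ[F] V k)
    (dp : ∀ k, V k →ₗ[F] V (k + 1)) (m : ℕ) : Module.End F (V (m + 1)) :=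
  dp m ∘ₗ dm m - dm (m + 1) ∘ₗ dp (m + 1)

/-- The operators `y_i` on `V (m+1)`:
`y_1 = (q^{k−1}(q−1))⁻¹ (d₊d₋ − d₋d₊) T_{k↘1}` (with `k = m+1`) and
`y_{i+1} = q T_i⁻¹ y_i T_i⁻¹`. -/
def yOp {F : Type*} [Field F] (q : F) (V : ℕ → Type*) [∀ k, AddCommGroup (V k)]
    [∀ k, Module F (V k)] (T : ∀ k, ℕ → Module.End F (V k))
    (dm : ∀ k, V (k + 1) →ₗ[F] V k) (dp : ∀ k, V k →ₗ[F] V (k + 1)) (m : ℕ) :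
    ℕ → Module.End F (V (m + 1))
  | 0 => 1
  | 1 => (q ^ m * (q - 1))⁻¹ • (commDD V dm dp m * TdownTo1 (T (m + 1)) (m + 1))
  | i + 2 => q • (heckeInv q (T (m + 1) (i + 1)) * yOp q V T dm dp m (i + 1) *
      heckeInv q (T (m + 1) (i + 1)))

/-- The operators `z_i` on `V (m+1)`:
`z_1 = (q^k/(1−q)) (d₊*d₋ − d₋d₊*) T*_{k↘1}` (with `k = m+1`) and
`z_{i+1} = q⁻¹ T_i z_i T_i`. -/
def zOp {F : Type*} [Field F] (q : F) (V : ℕ → Type*) [∀ k, AddCommGroup (V k)]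
    [∀ k, Module F (V k)] (T : ∀ k, ℕ → Module.End F (V k))
    (dm : ∀ k, V (k + 1) →ₗ[F] V k) (dps : ∀ k, V k →ₗ[F] V (k + 1)) (m : ℕ) :
    ℕ → Module.End F (V (m + 1))
  | 0 => 1
  | 1 => (q ^ (m + 1) / (1 - q)) •
      (commDD V dm dps m * TdownTo1 (fun i => heckeInv q (T (m + 1) i)) (m + 1))
  | i + 2 => q⁻¹ • (T (m + 1) (i + 1) * zOp q V T dm dps m (i + 1) * T (m + 1) (i + 1))

/-- The defining relations of an action of the Dyck path algebra `𝔸_q` on the family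
`V_k`, for operators `T_i : V_k → V_k` (`1 ≤ i ≤ k−1`), `d₋ : V_{k+1} → V_k`,
`d₊ : V_k → V_{k+1}`. -/
def AqRel {F : Type*} [Field F] (q : F) (V : ℕ → Type*) [∀ k, AddCommGroup (V k)]
    [∀ k, Module F (V k)] (T : ∀ k, ℕ → Module.End F (V k))
    (dm : ∀ k, V (k + 1) →ₗ[F] V k) (dp : ∀ k, V k →ₗ[F] V (k + 1)) : Prop :=
  (∀ k i, 1 ≤ i → i + 1 ≤ k →
    (T k i - 1) * (T k i + q • (1 : Module.End F (V k))) = 0) ∧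
  (∀ k i, 1 ≤ i → i + 2 ≤ k →
    T k i * T k (i + 1) * T k i = T k (i + 1) * T k i * T k (i + 1)) ∧
  (∀ k i j, 1 ≤ i → i + 1 ≤ k → 1 ≤ j → j + 1 ≤ k → i + 1 < j →
    T k i * T k j = T k j * T k i) ∧
  (∀ m, dm m ∘ₗ dm (m + 1) ∘ₗ (T (m + 2) (m + 1) : V (m + 2) →ₗ[F] V (m + 2)) =
    dm m ∘ₗ dm (m + 1)) ∧
  (∀ m i, 1 ≤ i → i ≤ m →
    (T (m + 1) i : V (m + 1) →ₗ[F] V (m + 1)) ∘ₗ dm (m + 1) =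
      dm (m + 1) ∘ₗ (T (m + 2) i : V (m + 2) →ₗ[F] V (m + 2))) ∧
  (∀ m, (T (m + 2) 1 : V (m + 2) →ₗ[F] V (m + 2)) ∘ₗ dp (m + 1) ∘ₗ dp m =
    dp (m + 1) ∘ₗ dp m) ∧
  (∀ m i, 1 ≤ i → i ≤ m →
    dp (m + 1) ∘ₗ (T (m + 1) i : V (m + 1) →ₗ[F] V (m + 1)) =
      (T (m + 2) (i + 1) : V (m + 2) →ₗ[F] V (m + 2)) ∘ₗ dp (m + 1)) ∧
  (∀ m, dm (m + 1) ∘ₗ (commDD V dm dp (m + 1) : V (m + 2) →ₗ[F] V (m + 2)) ∘ₗ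
      (T (m + 2) (m + 1) : V (m + 2) →ₗ[F] V (m + 2)) =
    q • ((commDD V dm dp m : V (m + 1) →ₗ[F] V (m + 1)) ∘ₗ dm (m + 1))) ∧
  (∀ m, (T (m + 2) 1 : V (m + 2) →ₗ[F] V (m + 2)) ∘ₗ
      (commDD V dm dp (m + 1) : V (m + 2) →ₗ[F] V (m + 2)) ∘ₗ dp (m + 1) =
    q • (dp (m + 1) ∘ₗ (commDD V dm dp m : V (m + 1) →ₗ[F] V (m + 1))))

/-- The intertwining relations between an action of `𝔸_q` (with `d₊`) and an action of
`𝔸_{q⁻¹}` (with `d₊*`): `d₊ z_i = z_{i+1} d₊`, `d₊* y_i = y_{i+1} d₊*` for `1 ≤ i ≤ k`,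
and `z_1 d₊ = −t q^{k+1} y_1 d₊* : V_k → V_{k+1}`. -/
def IntertwineRel {F : Type*} [Field F] (q t : F) (V : ℕ → Type*)
    [∀ k, AddCommGroup (V k)] [∀ k, Module F (V k)]
    (T : ∀ k, ℕ → Module.End F (V k)) (dm : ∀ k, V (k + 1) →ₗ[F] V k)
    (dp dps : ∀ k, V k →ₗ[F] V (k + 1)) : Prop :=
  (∀ m i, 1 ≤ i → i ≤ m + 1 →
    dp (m + 1) ∘ₗ (zOp q V T dm dps m i : V (m + 1) →ₗ[F] V (m + 1)) =
      (zOp q V T dm dps (m + 1) (i + 1) : V (m + 2) →ₗ[F] V (m + 2)) ∘ₗ dp (m + 1)) ∧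
  (∀ m i, 1 ≤ i → i ≤ m + 1 →
    dps (m + 1) ∘ₗ (yOp q V T dm dp m i : V (m + 1) →ₗ[F] V (m + 1)) =
      (yOp q V T dm dp (m + 1) (i + 1) : V (m + 2) →ₗ[F] V (m + 2)) ∘ₗ dps (m + 1)) ∧
  (∀ m, (zOp q V T dm dps m 1 : V (m + 1) →ₗ[F] V (m + 1)) ∘ₗ dp m =
    (-(t * q ^ (m + 1))) •
      ((yOp q V T dm dp m 1 : V (m + 1) →ₗ[F] V (m + 1)) ∘ₗ dps m))

/-- A pair of correctly intertwined actions of `𝔸_q` and `𝔸_{q⁻¹}`: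
`(T, d₋, d₊)` satisfies the relations of `𝔸_q`, `(T⁻¹, d₋, d₊*)` satisfies the relations
of `𝔸_{q⁻¹}`, and the two are correctly intertwined. -/
def CorrectlyIntertwined {F : Type*} [Field F] (q t : F) (V : ℕ → Type*)
    [∀ k, AddCommGroup (V k)] [∀ k, Module F (V k)]
    (T : ∀ k, ℕ → Module.End F (V k)) (dm : ∀ k, V (k + 1) →ₗ[F] V k)
    (dp dps : ∀ k, V k →ₗ[F] V (k + 1)) : Prop :=
  AqRel q V T dm dp ∧
  AqRel q⁻¹ V (fun k i => heckeInv q (T k i)) dm dps ∧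
  IntertwineRel q t V T dm dp dps

/-- The field `ℚ(q,t)` of rational functions in two variables over `ℚ`. -/
abbrev Fqt : Type := FractionRing (MvPolynomial (Fin 2) ℚ)

/-- The element `q` of `ℚ(q,t)`. -/
def qv : Fqt := algebraMap (MvPolynomial (Fin 2) ℚ) Fqt (MvPolynomial.X 0)

/-- The element `t` of `ℚ(q,t)`. -/
def tv : Fqt := algebraMap (MvPolynomial (Fin 2) ℚ) Fqt (MvPolynomial.X 1)

/-!
Write `y₁ = c φ T_{k↘1}` with `φ = d₊d₋ − d₋d₊`. The relations of `𝔸_q` alone show that `y₁`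
commutes with `d₋`, with `T_j` for `j ≥ 2` and with every `y_j`, that `d₊ y₁ = T₁ y₁ T₁⁻¹ d₊`, and
that `ψ = d₊d₋ − q⁻¹ d₋d₊` satisfies `T₁⁻¹ ψ d₊ = d₊ ψ`. The `z_i` are the `y_i` of the
`𝔸_{q⁻¹}`-action `(T⁻¹, d₋, d₊*)`, so the same facts hold for them.

Written as `D₊* = −y₁ d₊*`, the new operator inherits from `d₊*` every relation of `𝔸_{q⁻¹}` but
the last one, as well as `D₊* y_i = y_{i+1} D₊*`; its `z`-operators are `Z_i = −W_i z_i` with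
`W_i = T_{i↘1} y₁ T_{i↘1}⁻¹`, and `d₊ W_i = W_{i+1} d₊` gives `d₊ Z_i = Z_{i+1} d₊`. For the last
relation write instead `D₊* = (t q^{k+1})⁻¹ z₁ d₊`: then `D₊*d₋ − d₋D₊* = (t q^{k+1})⁻¹ z₁ ψ`, and
the relation follows from `ψ z₁ = z₂ ψ`, `T₁⁻¹ ψ d₊ = d₊ ψ` and the commutation of `T₁` with `z₁z₂`.
-/

section Hecke

variable {F : Type*} [Field F] {q : F} {M N : Type*} [AddCommGroup M] [Module F M]
  [AddCommGroup N] [Module F N]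

theorem mul_self_eq_of_hecke {X : Module.End F M} (hX : (X - 1) * (X + q • 1) = 0) :
    X * X = X + q • 1 - q • X := by
  rw [← sub_eq_zero, ← hX]
  simp only [sub_mul, mul_add, one_mul, mul_one, mul_smul_comm, smul_sub]
  abel

theorem heckeInv_mul_self (hq : q ≠ 0) {X : Module.End F M}
    (hX : (X - 1) * (X + q • 1) = 0) : heckeInv q X * X = 1 := by
  rw [heckeInv, smul_mul_assoc, add_mul, smul_mul_assoc, one_mul, mul_self_eq_of_hecke hX]
  match_scalars <;> field_simp
  ring

theorem mul_heckeInv_self (hq : q ≠ 0) {X : Module.End F M}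
    (hX : (X - 1) * (X + q • 1) = 0) : X * heckeInv q X = 1 := by
  rw [heckeInv, mul_smul_comm, mul_add, mul_smul_comm, mul_one, mul_self_eq_of_hecke hX]
  match_scalars <;> field_simp
  ring

theorem heckeInv_inv_heckeInv (hq : q ≠ 0) (X : Module.End F M) :
    heckeInv q⁻¹ (heckeInv q X) = X := by
  simp only [heckeInv]
  match_scalars <;> field_simp
  ring

theorem comp_heckeInv_of_comp {f : M →ₗ[F] N} {X : Module.End F M} {Y : Module.End F N}
    (h : f ∘ₗ X = Y ∘ₗ f) : f ∘ₗ heckeInv q X = heckeInv q Y ∘ₗ f := by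
  simp only [heckeInv, comp_smul, smul_comp, comp_add, add_comp, h]
  rfl

theorem Commute.heckeInv_left {X Y : Module.End F M} (h : Commute X Y) :
    Commute (heckeInv q X) Y :=
  (h.add_left ((Commute.one_left Y).smul_left _)).smul_left _

end Hecke

section TdownTo1

variable {G : Type*} [Monoid G]

theorem TdownTo1_succ_succ (S : ℕ → G) (n : ℕ) :
    TdownTo1 S (n + 2) = S (n + 1) * TdownTo1 S (n + 1) := rfl

theorem TdownTo1_succ_succ_eq_mul (S : ℕ → G) :
    ∀ n, TdownTo1 S (n + 2) = TdownTo1 (fun i => S (i + 1)) (n + 1) * S 1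
  | 0 => by simp [TdownTo1]
  | n + 1 => by
    rw [TdownTo1_succ_succ, TdownTo1_succ_succ_eq_mul S n, TdownTo1_succ_succ, mul_assoc]

theorem comp_TdownTo1_of_comp {R : Type*} [Semiring R] {M N : Type*} [AddCommMonoid M]
    [Module R M] [AddCommMonoid N] [Module R N] {f : M →ₗ[R] N} {S : ℕ → Module.End R M}
    {S' : ℕ → Module.End R N} {n : ℕ} (h : ∀ i, 1 ≤ i → i ≤ n → f ∘ₗ S i = S' i ∘ₗ f) :
    f ∘ₗ TdownTo1 S (n + 1) = TdownTo1 S' (n + 1) ∘ₗ f := by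
  induction n with
  | zero => rfl
  | succ n ih =>
    simp only [TdownTo1_succ_succ, Module.End.mul_eq_comp, ← comp_assoc,
      h (n + 1) (by omega) le_rfl]
    rw [comp_assoc, ih fun i h1 h2 => h i h1 (by omega), comp_assoc]

variable {S : ℕ → G} {K : ℕ}

theorem commute_TdownTo1
    (hfar : ∀ i j, 1 ≤ i → i + 1 < j → j + 1 ≤ K → Commute (S i) (S j)) :
    ∀ n j, n + 2 ≤ j → j + 1 ≤ K → Commute (S j) (TdownTo1 S (n + 1))
  | 0, j, _, _ => Commute.one_right _
  | n + 1, j, h1, h2 =>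
    ((hfar (n + 1) j (by omega) (by omega) h2).symm).mul_right
      (commute_TdownTo1 hfar n j (by omega) h2)

variable
  (hbraid : ∀ i, 1 ≤ i → i + 2 ≤ K → S i * S (i + 1) * S i = S (i + 1) * S i * S (i + 1))
  (hfar : ∀ i j, 1 ≤ i → i + 1 < j → j + 1 ≤ K → Commute (S i) (S j))
include hbraid hfar

theorem TdownTo1_mul_succ : ∀ n i, 1 ≤ i → i + 1 ≤ n → n + 1 ≤ K →
    TdownTo1 S (n + 1) * S (i + 1) = S i * TdownTo1 S (n + 1)
  | 0, _, _, hi, _ => by omega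
  | n + 1, i, h1, h2, h3 => by
    rw [TdownTo1_succ_succ]
    rcases Nat.lt_or_ge (i + 1) (n + 1) with hlt | hge
    · rw [mul_assoc, TdownTo1_mul_succ n i h1 (by omega) (by omega), ← mul_assoc,
        ← (hfar i (n + 1) h1 (by omega) (by omega)).eq, mul_assoc]
    · obtain ⟨n, rfl⟩ : ∃ n', n = n' + 1 := ⟨n - 1, by omega⟩
      obtain rfl : i = n + 1 := by omega
      have hc := commute_TdownTo1 hfar n (n + 1 + 1) le_rfl h3
      rw [TdownTo1_succ_succ, mul_assoc, mul_assoc, ← hc.eq, ← mul_assoc, ← mul_assoc,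
        ← hbraid (n + 1) h1 (by omega), mul_assoc, mul_assoc]

theorem TdownTo1_mul_TdownTo1_shift : ∀ m n, m + 1 ≤ n → n + 1 ≤ K →
    TdownTo1 S (n + 1) * TdownTo1 (fun i => S (i + 1)) (m + 1)
      = TdownTo1 S (m + 1) * TdownTo1 S (n + 1)
  | 0, _, _, _ => by simp [TdownTo1]
  | m + 1, n, h1, h2 => by
    rw [TdownTo1_succ_succ, TdownTo1_succ_succ, ← mul_assoc,
      TdownTo1_mul_succ hbraid hfar n (m + 1) (by omega) (by omega) h2, mul_assoc,
      TdownTo1_mul_TdownTo1_shift m n (by omega) h2, ← mul_assoc]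

end TdownTo1

def qCommDD {F : Type*} [Field F] (q : F) (V : ℕ → Type*) [∀ k, AddCommGroup (V k)]
    [∀ k, Module F (V k)] (dm : ∀ k, V (k + 1) →ₗ[F] V k)
    (dp : ∀ k, V k →ₗ[F] V (k + 1)) (m : ℕ) : Module.End F (V (m + 1)) :=
  dp m ∘ₗ dm m - q⁻¹ • (dm (m + 1) ∘ₗ dp (m + 1))

/-- `W_i = T_{i−1} ⋯ T_1 y_1 T_1⁻¹ ⋯ T_{i−1}⁻¹`. -/
def yConj {F : Type*} [Field F] (q : F) (V : ℕ → Type*) [∀ k, AddCommGroup (V k)]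
    [∀ k, Module F (V k)] (T : ∀ k, ℕ → Module.End F (V k))
    (dm : ∀ k, V (k + 1) →ₗ[F] V k) (dp : ∀ k, V k →ₗ[F] V (k + 1)) (m : ℕ) :
    ℕ → Module.End F (V (m + 1))
  | 0 => 1
  | 1 => yOp q V T dm dp m 1
  | i + 2 => T (m + 1) (i + 1) * yConj q V T dm dp m (i + 1) * heckeInv q (T (m + 1) (i + 1))

def rhoDps {F : Type*} [Field F] (q : F) (V : ℕ → Type*) [∀ k, AddCommGroup (V k)]
    [∀ k, Module F (V k)] (T : ∀ k, ℕ → Module.End F (V k))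
    (dm : ∀ k, V (k + 1) →ₗ[F] V k) (dp dps : ∀ k, V k →ₗ[F] V (k + 1)) :
    ∀ k, V k →ₗ[F] V (k + 1) :=
  fun k => -((yOp q V T dm dp k 1 : V (k + 1) →ₗ[F] V (k + 1)) ∘ₗ dps k)

section Operators

variable {F : Type*} [Field F] {q : F} {V : ℕ → Type*} [∀ k, AddCommGroup (V k)]
  [∀ k, Module F (V k)] {T : ∀ k, ℕ → Module.End F (V k)}
  {dm : ∀ k, V (k + 1) →ₗ[F] V k} {dp : ∀ k, V k →ₗ[F] V (k + 1)}

theorem commDD_apply (m : ℕ) (x : V (m + 1)) :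
    commDD V dm dp m x = dp m (dm m x) - dm (m + 1) (dp (m + 1) x) := rfl

theorem yOp_one (m : ℕ) :
    yOp q V T dm dp m 1
      = (q ^ m * (q - 1))⁻¹ • (commDD V dm dp m * TdownTo1 (T (m + 1)) (m + 1)) := rfl

theorem yOp_succ_succ (m i : ℕ) :
    yOp q V T dm dp m (i + 2) = q • (heckeInv q (T (m + 1) (i + 1)) * yOp q V T dm dp m (i + 1) *
      heckeInv q (T (m + 1) (i + 1))) := rfl

theorem yConj_one (m : ℕ) : yConj q V T dm dp m 1 = yOp q V T dm dp m 1 := rfl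

theorem yConj_succ_succ (m i : ℕ) :
    yConj q V T dm dp m (i + 2)
      = T (m + 1) (i + 1) * yConj q V T dm dp m (i + 1) * heckeInv q (T (m + 1) (i + 1)) := rfl

theorem zOp_one {dps : ∀ k, V k →ₗ[F] V (k + 1)} (m : ℕ) :
    zOp q V T dm dps m 1 = (q ^ (m + 1) / (1 - q)) •
      (commDD V dm dps m * TdownTo1 (fun i => heckeInv q (T (m + 1) i)) (m + 1)) := rfl

theorem zOp_succ_succ {dps : ∀ k, V k →ₗ[F] V (k + 1)} (m i : ℕ) :
    zOp q V T dm dps m (i + 2)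
      = q⁻¹ • (T (m + 1) (i + 1) * zOp q V T dm dps m (i + 1) * T (m + 1) (i + 1)) := rfl

theorem qCommDD_apply (m : ℕ) (x : V (m + 1)) :
    qCommDD q V dm dp m x = dp m (dm m x) - q⁻¹ • dm (m + 1) (dp (m + 1) x) := rfl

theorem rhoDps_apply (dps : ∀ k, V k →ₗ[F] V (k + 1)) (k : ℕ) (x : V k) :
    rhoDps q V T dm dp dps k x = -yOp q V T dm dp k 1 (dps k x) := rfl

theorem zOp_eq_yOp {dps : ∀ k, V k →ₗ[F] V (k + 1)} (hq : q ≠ 0) (m : ℕ) :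
    ∀ i, zOp q V T dm dps m i = yOp q⁻¹ V (fun k i => heckeInv q (T k i)) dm dps m i
  | 0 => rfl
  | 1 => by
    rw [zOp_one, yOp_one]
    congr 1
    rw [inv_pow, mul_inv, inv_inv, show q⁻¹ - 1 = (1 - q) / q by field_simp, inv_div, pow_succ,
      mul_div_assoc]
  | i + 2 => by
    rw [zOp_succ_succ, yOp_succ_succ, heckeInv_inv_heckeInv hq, zOp_eq_yOp hq m (i + 1)]

end Operators

namespace AqRel

variable {F : Type*} [Field F] {q : F} {V : ℕ → Type*} [∀ k, AddCommGroup (V k)]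
  [∀ k, Module F (V k)] {T : ∀ k, ℕ → Module.End F (V k)}
  {dm : ∀ k, V (k + 1) →ₗ[F] V k} {dp : ∀ k, V k →ₗ[F] V (k + 1)}
  (h : AqRel q V T dm dp)
include h

theorem heckeInv_mul_T (hq : q ≠ 0) {k i : ℕ} (h1 : 1 ≤ i) (h2 : i + 1 ≤ k) :
    heckeInv q (T k i) * T k i = 1 :=
  heckeInv_mul_self hq (h.1 k i h1 h2)

theorem T_mul_heckeInv (hq : q ≠ 0) {k i : ℕ} (h1 : 1 ≤ i) (h2 : i + 1 ≤ k) :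
    T k i * heckeInv q (T k i) = 1 :=
  mul_heckeInv_self hq (h.1 k i h1 h2)

theorem braid (k : ℕ) : ∀ i, 1 ≤ i → i + 2 ≤ k →
    T k i * T k (i + 1) * T k i = T k (i + 1) * T k i * T k (i + 1) :=
  h.2.1 k

theorem commute_T (k : ℕ) : ∀ i j, 1 ≤ i → i + 1 < j → j + 1 ≤ k → Commute (T k i) (T k j) :=
  fun i j h1 h2 h3 => h.2.2.1 k i j h1 (by omega) (by omega) h3 h2

theorem T_dm_apply {m i : ℕ} (h1 : 1 ≤ i) (h2 : i ≤ m) (x : V (m + 2)) :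
    T (m + 1) i (dm (m + 1) x) = dm (m + 1) (T (m + 2) i x) :=
  LinearMap.congr_fun (h.2.2.2.2.1 m i h1 h2) x

theorem T_one_dp_dp_apply (m : ℕ) (x : V m) :
    T (m + 2) 1 (dp (m + 1) (dp m x)) = dp (m + 1) (dp m x) :=
  LinearMap.congr_fun (h.2.2.2.2.2.1 m) x

theorem dp_T_apply {m i : ℕ} (h1 : 1 ≤ i) (h2 : i ≤ m) (x : V (m + 1)) :
    dp (m + 1) (T (m + 1) i x) = T (m + 2) (i + 1) (dp (m + 1) x) :=
  LinearMap.congr_fun (h.2.2.2.2.2.2.1 m i h1 h2) x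

theorem dm_commDD_T_apply (m : ℕ) (x : V (m + 2)) :
    dm (m + 1) (commDD V dm dp (m + 1) (T (m + 2) (m + 1) x))
      = q • commDD V dm dp m (dm (m + 1) x) :=
  LinearMap.congr_fun (h.2.2.2.2.2.2.2.1 m) x

theorem T_commDD_dp_apply (m : ℕ) (x : V (m + 1)) :
    T (m + 2) 1 (commDD V dm dp (m + 1) (dp (m + 1) x))
      = q • dp (m + 1) (commDD V dm dp m x) :=
  LinearMap.congr_fun (h.2.2.2.2.2.2.2.2 m) x

theorem heckeInv_dm_apply {m i : ℕ} (h1 : 1 ≤ i) (h2 : i ≤ m) (x : V (m + 2)) :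
    heckeInv q (T (m + 1) i) (dm (m + 1) x) = dm (m + 1) (heckeInv q (T (m + 2) i) x) := by
  have hc : dm (m + 1) ∘ₗ T (m + 2) i = T (m + 1) i ∘ₗ dm (m + 1) :=
    LinearMap.ext fun x => (h.T_dm_apply h1 h2 x).symm
  exact (LinearMap.congr_fun (comp_heckeInv_of_comp (q := q) hc) x).symm

theorem dp_heckeInv_apply {m i : ℕ} (h1 : 1 ≤ i) (h2 : i ≤ m) (x : V (m + 1)) :
    dp (m + 1) (heckeInv q (T (m + 1) i) x) = heckeInv q (T (m + 2) (i + 1)) (dp (m + 1) x) :=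
  LinearMap.congr_fun (comp_heckeInv_of_comp (LinearMap.ext (h.dp_T_apply h1 h2))) x

theorem T_mul_commDD {m j : ℕ} (h1 : 1 ≤ j) (h2 : j ≤ m) :
    T (m + 2) (j + 1) * commDD V dm dp (m + 1) = commDD V dm dp (m + 1) * T (m + 2) j := by
  ext x
  simp only [Module.End.mul_apply, commDD_apply, map_sub]
  rw [← h.dp_T_apply h1 h2, h.T_dm_apply h1 h2, h.T_dm_apply (by omega) (by omega),
    ← h.dp_T_apply h1 (by omega)]

theorem T_one_mul_commDD_sq (hq : q ≠ 0) (m : ℕ) :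
    T (m + 2) 1 * (commDD V dm dp (m + 1) * commDD V dm dp (m + 1))
      = commDD V dm dp (m + 1) * commDD V dm dp (m + 1) * T (m + 2) (m + 1) := by
  have hdpdm (x : V (m + 2)) : T (m + 2) 1 (commDD V dm dp (m + 1) (dp (m + 1) (dm (m + 1) x)))
      = dp (m + 1) (dm (m + 1) (commDD V dm dp (m + 1) (T (m + 2) (m + 1) x))) := by
    rw [h.T_commDD_dp_apply, h.dm_commDD_T_apply, map_smul]
  have hdmdp (x : V (m + 2)) :
      T (m + 2) 1 (commDD V dm dp (m + 1) (dm (m + 2) (dp (m + 2) x)))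
        = dm (m + 2) (dp (m + 2) (commDD V dm dp (m + 1) (T (m + 2) (m + 1) x))) := by
    have hcomm (y : V (m + 3)) : commDD V dm dp (m + 1) (dm (m + 2) y)
        = q⁻¹ • dm (m + 2) (commDD V dm dp (m + 2) (T (m + 3) (m + 2) y)) := by
      rw [h.dm_commDD_T_apply, inv_smul_smul₀ hq]
    rw [hcomm, ← h.dp_T_apply (m := m + 1) (by omega) le_rfl, map_smul,
      h.T_dm_apply le_rfl (by omega), h.T_commDD_dp_apply, map_smul, inv_smul_smul₀ hq]
  ext x
  simp only [Module.End.mul_apply]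
  rw [commDD_apply (m + 1) x, map_sub, map_sub, hdpdm, hdmdp, ← commDD_apply]

theorem commute_T_yOp_one {m j : ℕ} (h1 : 1 ≤ j) (h2 : j ≤ m) :
    Commute (T (m + 2) (j + 1)) (yOp q V T dm dp (m + 1) 1) := by
  have hW : TdownTo1 (T (m + 2)) (m + 2) * T (m + 2) (j + 1)
      = T (m + 2) j * TdownTo1 (T (m + 2)) (m + 2) :=
    TdownTo1_mul_succ (h.braid _) (h.commute_T _) (m + 1) j h1 (by omega) le_rfl
  rw [commute_iff_eq, yOp_one, mul_smul_comm, smul_mul_assoc, ← mul_assoc,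
    h.T_mul_commDD h1 h2, mul_assoc, ← hW, mul_assoc]

theorem commute_yOp_one_yOp_two (hq : q ≠ 0) (m : ℕ) :
    Commute (yOp q V T dm dp (m + 1) 1) (yOp q V T dm dp (m + 1) 2) := by
  set φ := commDD V dm dp (m + 1)
  set S := T (m + 2)
  set W := TdownTo1 S (m + 1)
  set W' := TdownTo1 (fun i => S (i + 1)) (m + 1)
  set c := (q ^ (m + 1) * (q - 1))⁻¹
  have hsplit : TdownTo1 S (m + 2) = W' * S 1 := TdownTo1_succ_succ_eq_mul S m
  have hT1 (X : Module.End F (V (m + 2))) : S 1 * (heckeInv q (S 1) * X) = X := by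
    rw [← mul_assoc, h.T_mul_heckeInv hq le_rfl (by omega), one_mul]
  have hy1 : yOp q V T dm dp (m + 1) 1 = c • (φ * (W' * S 1)) := by rw [yOp_one, ← hsplit]
  have hy2 : yOp q V T dm dp (m + 1) 2 = (q * c) • (heckeInv q (S 1) * (φ * W')) := by
    rw [yOp_succ_succ, hy1, mul_smul_comm, smul_mul_assoc, smul_smul, mul_assoc, mul_assoc,
      mul_assoc, h.T_mul_heckeInv hq le_rfl (by omega), mul_one]
  have hφW (X : Module.End F (V (m + 2))) : W' * (φ * X) = φ * (W * X) := by
    have hφW : φ * W = W' * φ :=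
      comp_TdownTo1_of_comp fun i h1 h2 => (h.T_mul_commDD h1 h2).symm
    rw [← mul_assoc, ← hφW, mul_assoc]
  have hword : W * (W' * S 1) = S (m + 1) * (W * W') := by
    rw [← hsplit, ← TdownTo1_mul_TdownTo1_shift (h.braid _) (h.commute_T _) m (m + 1) le_rfl
      le_rfl, TdownTo1_succ_succ, mul_assoc]
  have hφφ : heckeInv q (S 1) * (φ * φ) = φ * φ * heckeInv q (S (m + 1)) :=
    (comp_heckeInv_of_comp (h.T_one_mul_commDD_sq hq m).symm).symm
  have hy1y2 : φ * (W' * S 1) * (heckeInv q (S 1) * (φ * W')) = φ * (φ * (W * W')) := by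
    simp only [mul_assoc, hT1, hφW]
  have hy2y1 : heckeInv q (S 1) * (φ * W') * (φ * (W' * S 1)) = φ * (φ * (W * W')) :=
    calc _ = heckeInv q (S 1) * (φ * φ) * (S (m + 1) * (W * W')) := by
          simp only [mul_assoc, hφW, hword]
      _ = φ * φ * (heckeInv q (S (m + 1)) * S (m + 1)) * (W * W') := by
          rw [hφφ]; simp only [mul_assoc]
      _ = _ := by rw [h.heckeInv_mul_T hq (by omega) le_rfl, mul_one, mul_assoc]
  rw [commute_iff_eq, hy1, hy2, smul_mul_smul_comm, smul_mul_smul_comm, mul_comm c, hy1y2,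
    hy2y1]

theorem commute_yOp_one_yOp (hq : q ≠ 0) (m : ℕ) : ∀ j, j ≤ m + 2 →
    Commute (yOp q V T dm dp (m + 1) 1) (yOp q V T dm dp (m + 1) j)
  | 0, _ => Commute.one_right _
  | 1, _ => Commute.refl _
  | 2, _ => h.commute_yOp_one_yOp_two hq m
  | j + 3, hj => by
    have hT := ((h.commute_T_yOp_one (m := m) (j := j + 1) (by omega) (by omega)).heckeInv_left
      (q := q)).symm
    rw [yOp_succ_succ]
    exact ((hT.mul_right (commute_yOp_one_yOp hq m (j + 2) (by omega))).mul_right hT).smul_right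
      q

theorem dm_yOp_one_apply (hq : q ≠ 0) (m : ℕ) (x : V (m + 2)) :
    dm (m + 1) (yOp q V T dm dp (m + 1) 1 x) = yOp q V T dm dp m 1 (dm (m + 1) x) := by
  have hW (v : V (m + 2)) : dm (m + 1) (TdownTo1 (T (m + 2)) (m + 1) v)
      = TdownTo1 (T (m + 1)) (m + 1) (dm (m + 1) v) :=
    LinearMap.congr_fun (comp_TdownTo1_of_comp fun i h1 h2 =>
      LinearMap.ext fun y => (h.T_dm_apply h1 h2 y).symm) v
  rw [yOp_one, yOp_one, LinearMap.smul_apply, Module.End.mul_apply, TdownTo1_succ_succ,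
    Module.End.mul_apply, map_smul, h.dm_commDD_T_apply, hW, LinearMap.smul_apply,
    Module.End.mul_apply, smul_smul]
  congr 1
  field_simp
  ring

theorem dm_yOp_apply (hq : q ≠ 0) (m : ℕ) : ∀ i, i ≤ m + 1 → ∀ x : V (m + 2),
    dm (m + 1) (yOp q V T dm dp (m + 1) i x) = yOp q V T dm dp m i (dm (m + 1) x)
  | 0, _, _ => rfl
  | 1, _, x => h.dm_yOp_one_apply hq m x
  | i + 2, hi, x => by
    simp only [yOp_succ_succ, LinearMap.smul_apply, Module.End.mul_apply, map_smul]
    rw [← h.heckeInv_dm_apply (by omega) (by omega), dm_yOp_apply hq m (i + 1) (by omega),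
      h.heckeInv_dm_apply (by omega) (by omega)]

theorem dp_yOp_one_apply (hq : q ≠ 0) (m : ℕ) (x : V (m + 1)) :
    dp (m + 1) (yOp q V T dm dp m 1 x)
      = T (m + 2) 1 (yOp q V T dm dp (m + 1) 1 (heckeInv q (T (m + 2) 1) (dp (m + 1) x))) := by
  have hW : dp (m + 1) (TdownTo1 (T (m + 1)) (m + 1) x)
      = TdownTo1 (fun i => T (m + 2) (i + 1)) (m + 1) (dp (m + 1) x) :=
    LinearMap.congr_fun (comp_TdownTo1_of_comp fun i h1 h2 =>
      LinearMap.ext (h.dp_T_apply h1 h2)) x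
  have hT1 (v : V (m + 2)) : T (m + 2) 1 (heckeInv q (T (m + 2) 1) v) = v := by
    rw [← Module.End.mul_apply, h.T_mul_heckeInv hq le_rfl (by omega), Module.End.one_apply]
  simp only [yOp_one, TdownTo1_succ_succ_eq_mul, LinearMap.smul_apply, map_smul,
    Module.End.mul_apply, hT1]
  rw [← hW, h.T_commDD_dp_apply, smul_smul]
  congr 1
  field_simp
  ring

theorem commute_heckeInv_yOp_one_mul_yOp_two (hq : q ≠ 0) (m : ℕ) :
    Commute (heckeInv q (T (m + 2) 1))
      (yOp q V T dm dp (m + 1) 1 * yOp q V T dm dp (m + 1) 2) := by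
  set a := heckeInv q (T (m + 2) 1)
  set y₁ := yOp q V T dm dp (m + 1) 1
  set y₂ := yOp q V T dm dp (m + 1) 2
  have hy₂ : y₂ = q • (a * y₁ * a) := yOp_succ_succ (m + 1) 0
  rw [commute_iff_eq]
  calc a * (y₁ * y₂) = y₂ * y₁ * a := by
        rw [hy₂]
        simp only [mul_smul_comm, smul_mul_assoc, mul_assoc]
    _ = y₁ * y₂ * a := by
        congr 1
        exact (h.commute_yOp_one_yOp_two hq m).eq.symm

theorem heckeInv_qCommDD_dp_apply (hq : q ≠ 0) (m : ℕ) (x : V (m + 1)) :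
    heckeInv q (T (m + 2) 1) (qCommDD q V dm dp (m + 1) (dp (m + 1) x))
      = dp (m + 1) (qCommDD q V dm dp m x) := by
  have hdpdmdp : T (m + 2) 1 (dp (m + 1) (dm (m + 1) (dp (m + 1) x)))
      = q • dp (m + 1) (commDD V dm dp m x) + dm (m + 2) (dp (m + 2) (dp (m + 1) x)) := by
    rw [← sub_add_cancel (dp (m + 1) (dm (m + 1) (dp (m + 1) x))) (dm (m + 2) _),
      ← commDD_apply, map_add, h.T_commDD_dp_apply, h.T_dm_apply le_rfl (by omega),
      h.T_one_dp_dp_apply]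
  have hT : T (m + 2) 1 (dp (m + 1) (qCommDD q V dm dp m x))
      = qCommDD q V dm dp (m + 1) (dp (m + 1) x) := by
    rw [qCommDD_apply, qCommDD_apply, map_sub, map_smul, map_sub, map_smul,
      h.T_one_dp_dp_apply, hdpdmdp, commDD_apply, map_sub, smul_add, inv_smul_smul₀ hq]
    abel
  rw [← hT, ← Module.End.mul_apply, h.heckeInv_mul_T hq le_rfl (by omega), Module.End.one_apply]

theorem dp_yConj_apply (hq : q ≠ 0) (m : ℕ) : ∀ i, 1 ≤ i → i ≤ m + 1 → ∀ x : V (m + 1),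
    dp (m + 1) (yConj q V T dm dp m i x) = yConj q V T dm dp (m + 1) (i + 1) (dp (m + 1) x)
  | 0, h0, _, _ => absurd h0 (by omega)
  | 1, _, _, x => h.dp_yOp_one_apply hq m x
  | i + 2, _, hi, x => by
    rw [yConj_succ_succ, yConj_succ_succ]
    simp only [Module.End.mul_apply]
    rw [h.dp_T_apply (by omega) (by omega), dp_yConj_apply hq m (i + 1) (by omega) (by omega),
      h.dp_heckeInv_apply (by omega) (by omega)]

theorem commDD_rhoDps (hq : q ≠ 0) (dps : ∀ k, V k →ₗ[F] V (k + 1)) (m : ℕ) :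
    commDD V dm (rhoDps q V T dm dp dps) m = -(yOp q V T dm dp m 1 * commDD V dm dps m) := by
  ext x
  simp only [commDD_apply, rhoDps_apply, map_neg, LinearMap.neg_apply, Module.End.mul_apply,
    map_sub, h.dm_yOp_one_apply hq]
  abel

theorem zOp_rhoDps (hq : q ≠ 0) (dps : ∀ k, V k →ₗ[F] V (k + 1)) (m : ℕ) :
    ∀ i, 1 ≤ i → i ≤ m + 1 → zOp q V T dm (rhoDps q V T dm dp dps) m i
      = -(yConj q V T dm dp m i * zOp q V T dm dps m i)
  | 0, h0, _ => absurd h0 (by omega)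
  | 1, _, _ => by
    rw [zOp_one, zOp_one, h.commDD_rhoDps hq, yConj_one, neg_mul, mul_assoc, smul_neg,
      mul_smul_comm]
  | i + 2, _, hi => by
    rw [zOp_succ_succ, zOp_succ_succ, zOp_rhoDps hq dps m (i + 1) (by omega) (by omega),
      yConj_succ_succ, mul_neg, neg_mul, smul_neg, mul_smul_comm]
    simp only [mul_assoc]
    rw [← mul_assoc (heckeInv q _), h.heckeInv_mul_T hq (by omega) (by omega), one_mul]

end AqRel

namespace CorrectlyIntertwined

variable {F : Type*} [Field F] {q t : F} {V : ℕ → Type*} [∀ k, AddCommGroup (V k)]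
  [∀ k, Module F (V k)] {T : ∀ k, ℕ → Module.End F (V k)}
  {dm : ∀ k, V (k + 1) →ₗ[F] V k} {dp dps : ∀ k, V k →ₗ[F] V (k + 1)}
  (h : CorrectlyIntertwined q t V T dm dp dps)
include h

theorem dp_zOp_apply {m i : ℕ} (h1 : 1 ≤ i) (h2 : i ≤ m + 1) (x : V (m + 1)) :
    dp (m + 1) (zOp q V T dm dps m i x) = zOp q V T dm dps (m + 1) (i + 1) (dp (m + 1) x) :=
  LinearMap.congr_fun (h.2.2.1 m i h1 h2) x

theorem dps_yOp_apply {m i : ℕ} (h1 : 1 ≤ i) (h2 : i ≤ m + 1) (x : V (m + 1)) :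
    dps (m + 1) (yOp q V T dm dp m i x) = yOp q V T dm dp (m + 1) (i + 1) (dps (m + 1) x) :=
  LinearMap.congr_fun (h.2.2.2.1 m i h1 h2) x

theorem zOp_one_dp_apply (m : ℕ) (x : V m) :
    zOp q V T dm dps m 1 (dp m x) = (-(t * q ^ (m + 1))) • yOp q V T dm dp m 1 (dps m x) :=
  LinearMap.congr_fun (h.2.2.2.2 m) x

theorem dm_zOp_apply (hq : q ≠ 0) (m i : ℕ) (hi : i ≤ m + 1) (x : V (m + 2)) :
    dm (m + 1) (zOp q V T dm dps (m + 1) i x) = zOp q V T dm dps m i (dm (m + 1) x) := by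
  simp only [zOp_eq_yOp hq]
  exact h.2.1.dm_yOp_apply (inv_ne_zero hq) m i hi x

theorem commute_heckeInv_zOp_one_mul_zOp_two (hq : q ≠ 0) (m : ℕ) :
    Commute (heckeInv q (T (m + 2) 1))
      (zOp q V T dm dps (m + 1) 1 * zOp q V T dm dps (m + 1) 2) := by
  have hc := h.2.1.commute_heckeInv_yOp_one_mul_yOp_two (inv_ne_zero hq) m
  rw [heckeInv_inv_heckeInv hq, ← zOp_eq_yOp hq, ← zOp_eq_yOp hq] at hc
  exact hc.heckeInv_left

theorem qCommDD_zOp_one_apply (hq : q ≠ 0) (m : ℕ) (x : V (m + 2)) :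
    qCommDD q V dm dp (m + 1) (zOp q V T dm dps (m + 1) 1 x)
      = zOp q V T dm dps (m + 1) 2 (qCommDD q V dm dp (m + 1) x) := by
  rw [qCommDD_apply, qCommDD_apply, h.dm_zOp_apply hq m 1 (by omega),
    h.dp_zOp_apply le_rfl (by omega), h.dp_zOp_apply le_rfl (by omega),
    h.dm_zOp_apply hq (m + 1) 2 (by omega), map_sub, map_smul]

theorem rhoDps_apply_eq_zOp (hq : q ≠ 0) (ht : t ≠ 0) (k : ℕ) (x : V k) :
    rhoDps q V T dm dp dps k x = (t * q ^ (k + 1))⁻¹ • zOp q V T dm dps k 1 (dp k x) := by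
  rw [rhoDps_apply, h.zOp_one_dp_apply, smul_smul, mul_neg,
    inv_mul_cancel₀ (mul_ne_zero ht (pow_ne_zero _ hq)), neg_one_smul]

theorem commDD_rhoDps_eq_zOp (hq : q ≠ 0) (ht : t ≠ 0) (m : ℕ) :
    commDD V dm (rhoDps q V T dm dp dps) m
      = (t * q ^ (m + 1))⁻¹ • (zOp q V T dm dps m 1 * qCommDD q V dm dp m) := by
  ext x
  simp only [commDD_apply, h.rhoDps_apply_eq_zOp hq ht, map_smul, h.dm_zOp_apply hq m 1 (by omega),
    LinearMap.smul_apply, Module.End.mul_apply, qCommDD_apply, map_sub, smul_sub, smul_smul]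
  congr 2
  rw [pow_succ, ← mul_assoc, mul_inv]

theorem heckeInv_comp_rhoDps_comp_rhoDps (hq : q ≠ 0) (m : ℕ) :
    (heckeInv q (T (m + 2) 1) : V (m + 2) →ₗ[F] V (m + 2)) ∘ₗ
        rhoDps q V T dm dp dps (m + 1) ∘ₗ rhoDps q V T dm dp dps m
      = rhoDps q V T dm dp dps (m + 1) ∘ₗ rhoDps q V T dm dp dps m := by
  ext x
  have hc := LinearMap.congr_fun (h.1.commute_heckeInv_yOp_one_mul_yOp_two hq m).eq
    (dps (m + 1) (dps m x))
  simp only [Module.End.mul_apply, h.2.1.T_one_dp_dp_apply] at hc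
  simpa only [comp_apply, rhoDps_apply, map_neg, neg_neg, h.dps_yOp_apply le_rfl le_add_self]

theorem rhoDps_comp_heckeInv {m i : ℕ} (h1 : 1 ≤ i) (h2 : i ≤ m) :
    rhoDps q V T dm dp dps (m + 1) ∘ₗ (heckeInv q (T (m + 1) i) : V (m + 1) →ₗ[F] V (m + 1))
      = (heckeInv q (T (m + 2) (i + 1)) : V (m + 2) →ₗ[F] V (m + 2)) ∘ₗ
          rhoDps q V T dm dp dps (m + 1) := by
  ext x
  simp only [comp_apply, rhoDps_apply, map_neg]
  rw [h.2.1.dp_T_apply h1 h2, ← Module.End.mul_apply, ← Module.End.mul_apply,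
    ((h.1.commute_T_yOp_one h1 h2).heckeInv_left (q := q)).eq]

theorem dm_comp_commDD_rhoDps_comp_heckeInv (hq : q ≠ 0) (m : ℕ) :
    dm (m + 1) ∘ₗ (commDD V dm (rhoDps q V T dm dp dps) (m + 1) : V (m + 2) →ₗ[F] V (m + 2)) ∘ₗ
        (heckeInv q (T (m + 2) (m + 1)) : V (m + 2) →ₗ[F] V (m + 2))
      = q⁻¹ • ((commDD V dm (rhoDps q V T dm dp dps) m : V (m + 1) →ₗ[F] V (m + 1)) ∘ₗ
          dm (m + 1)) := by
  rw [h.1.commDD_rhoDps hq, h.1.commDD_rhoDps hq]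
  ext x
  simp only [comp_apply, LinearMap.neg_apply, Module.End.mul_apply, map_neg,
    LinearMap.smul_apply, h.1.dm_yOp_one_apply hq, h.2.1.dm_commDD_T_apply, map_smul, smul_neg]

theorem heckeInv_comp_commDD_rhoDps_comp_rhoDps (hq : q ≠ 0) (ht : t ≠ 0) (m : ℕ) :
    (heckeInv q (T (m + 2) 1) : V (m + 2) →ₗ[F] V (m + 2)) ∘ₗ
        (commDD V dm (rhoDps q V T dm dp dps) (m + 1) : V (m + 2) →ₗ[F] V (m + 2)) ∘ₗ
          rhoDps q V T dm dp dps (m + 1)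
      = q⁻¹ • (rhoDps q V T dm dp dps (m + 1) ∘ₗ
          (commDD V dm (rhoDps q V T dm dp dps) m : V (m + 1) →ₗ[F] V (m + 1))) := by
  rw [h.commDD_rhoDps_eq_zOp hq ht, h.commDD_rhoDps_eq_zOp hq ht]
  ext x
  simp only [comp_apply, LinearMap.smul_apply, Module.End.mul_apply, map_smul,
    h.rhoDps_apply_eq_zOp hq ht, h.qCommDD_zOp_one_apply hq]
  rw [← Module.End.mul_apply (zOp _ _ _ _ _ _ 1), ← Module.End.mul_apply (heckeInv _ _),
    (h.commute_heckeInv_zOp_one_mul_zOp_two hq m).eq, Module.End.mul_apply, Module.End.mul_apply,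
    h.1.heckeInv_qCommDD_dp_apply hq, ← h.dp_zOp_apply le_rfl (by omega), smul_smul, smul_smul,
    smul_smul]
  congr 1
  field_simp
  ring

theorem dp_comp_zOp_rhoDps (hq : q ≠ 0) {m i : ℕ} (h1 : 1 ≤ i) (h2 : i ≤ m + 1) :
    dp (m + 1) ∘ₗ (zOp q V T dm (rhoDps q V T dm dp dps) m i : V (m + 1) →ₗ[F] V (m + 1))
      = (zOp q V T dm (rhoDps q V T dm dp dps) (m + 1) (i + 1) : V (m + 2) →ₗ[F] V (m + 2)) ∘ₗ
          dp (m + 1) := by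
  rw [h.1.zOp_rhoDps hq dps m i h1 h2, h.1.zOp_rhoDps hq dps (m + 1) (i + 1) (by omega) (by omega)]
  ext x
  simp only [comp_apply, LinearMap.neg_apply, Module.End.mul_apply, map_neg,
    h.1.dp_yConj_apply hq m i h1 h2, h.dp_zOp_apply h1 h2]

theorem rhoDps_comp_yOp (hq : q ≠ 0) {m i : ℕ} (h1 : 1 ≤ i) (h2 : i ≤ m + 1) :
    rhoDps q V T dm dp dps (m + 1) ∘ₗ (yOp q V T dm dp m i : V (m + 1) →ₗ[F] V (m + 1))
      = (yOp q V T dm dp (m + 1) (i + 1) : V (m + 2) →ₗ[F] V (m + 2)) ∘ₗ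
          rhoDps q V T dm dp dps (m + 1) := by
  ext x
  simp only [comp_apply, rhoDps_apply, map_neg, h.dps_yOp_apply h1 h2]
  rw [← Module.End.mul_apply, ← Module.End.mul_apply,
    (h.1.commute_yOp_one_yOp hq m (i + 1) (by omega)).eq]

theorem zOp_rhoDps_one_comp_dp (hq : q ≠ 0) (m : ℕ) :
    (zOp q V T dm (rhoDps q V T dm dp dps) m 1 : V (m + 1) →ₗ[F] V (m + 1)) ∘ₗ dp m
      = (-(t * q ^ (m + 1))) • ((yOp q V T dm dp m 1 : V (m + 1) →ₗ[F] V (m + 1)) ∘ₗ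
          rhoDps q V T dm dp dps m) := by
  rw [h.1.zOp_rhoDps hq dps m 1 le_rfl (by omega), yConj_one]
  ext x
  simp only [comp_apply, LinearMap.neg_apply, Module.End.mul_apply, LinearMap.smul_apply,
    rhoDps_apply, h.zOp_one_dp_apply, map_smul, map_neg, smul_neg, neg_smul]

theorem aqRel_rhoDps (hq : q ≠ 0) (ht : t ≠ 0) :
    AqRel q⁻¹ V (fun k i => heckeInv q (T k i)) dm (rhoDps q V T dm dp dps) := by
  obtain ⟨hquad, hbraid, hfar, hdmdm, hTdm, -, -, -, -⟩ := h.2.1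
  exact ⟨hquad, hbraid, hfar, hdmdm, hTdm, h.heckeInv_comp_rhoDps_comp_rhoDps hq,
    fun m i h1 h2 => h.rhoDps_comp_heckeInv h1 h2, h.dm_comp_commDD_rhoDps_comp_heckeInv hq,
    h.heckeInv_comp_commDD_rhoDps_comp_rhoDps hq ht⟩

theorem intertwineRel_rhoDps (hq : q ≠ 0) :
    IntertwineRel q t V T dm dp (rhoDps q V T dm dp dps) :=
  ⟨fun _ _ h1 h2 => h.dp_comp_zOp_rhoDps hq h1 h2, fun _ _ h1 h2 => h.rhoDps_comp_yOp hq h1 h2,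
    h.zOp_rhoDps_one_comp_dp hq⟩

end CorrectlyIntertwined

theorem qv_ne_zero : qv ≠ 0 :=
  (map_ne_zero_iff _ (IsFractionRing.injective _ _)).mpr (MvPolynomial.X_ne_zero 0)

theorem tv_ne_zero : tv ≠ 0 :=
  (map_ne_zero_iff _ (IsFractionRing.injective _ _)).mpr (MvPolynomial.X_ne_zero 1)

/-- Replication: given correctly intertwined actions of `𝔸_q` and `𝔸_{q⁻¹}` over
`ℚ(q,t)`, the operator `D₊* := −y_1 d₊* : V_k → V_{k+1}` together with `T_i⁻¹`, `d₋`
again satisfies the defining relations of an action of `𝔸_{q⁻¹}`, and the pair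
`(T, d₋, d₊)`, `(T⁻¹, d₋, D₊*)` is again correctly intertwined. -/
theorem replication_rho_two (V : ℕ → Type*) [∀ k, AddCommGroup (V k)]
    [∀ k, Module Fqt (V k)] (T : ∀ k, ℕ → Module.End Fqt (V k))
    (dm : ∀ k, V (k + 1) →ₗ[Fqt] V k) (dp dps : ∀ k, V k →ₗ[Fqt] V (k + 1))
    (h : CorrectlyIntertwined qv tv V T dm dp dps) :
    AqRel qv⁻¹ V (fun k i => heckeInv qv (T k i)) dm
      (fun k => -((yOp qv V T dm dp k 1 : V (k + 1) →ₗ[Fqt] V (k + 1)) ∘ₗ dps k)) ∧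
    IntertwineRel qv tv V T dm dp
      (fun k => -((yOp qv V T dm dp k 1 : V (k + 1) →ₗ[Fqt] V (k + 1)) ∘ₗ dps k)) :=
  ⟨h.aqRel_rhoDps qv_ne_zero tv_ne_zero, h.intertwineRel_rhoDps qv_ne_zero⟩
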